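/- For m, n ≥ 3, the state complexity of Uₘ(a,b,c) ⊕ (Uₙ(a,b,c))ᴿ is exactly m·2ⁿ, where Uₖ(a,b,c) is the language of the k-state DFA with a acting as the cycle (0,…,k−1), b as the transposition (0,1), c sending k−1 to 0 and fixing other states, initial state 0 and final state k−1. -/

import Mathlib

namespace SCPaper

/-- Reversal of a language. -/
def rev {α : Type} (L : Language α) : Language α := {w | w.reverse ∈ L}

/-- Union of two languages. -/
def lunion {α : Type} (K L : Language α) : Language α := {w | w ∈ K ∨ w ∈ L}

/-- Intersection of two languages. -/
def linter {α : Type} (K L : Language α) : Language α := {w | w ∈ K ∧ w ∈ L}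

/-- Difference of two languages. -/
def ldiff {α : Type} (K L : Language α) : Language α := {w | w ∈ K ∧ w ∉ L}

/-- Symmetric difference of two languages. -/
def lsymm {α : Type} (K L : Language α) : Language α := lunion (ldiff K L) (ldiff L K)

/-- Sizes (numbers of states) of complete DFAs recognizing `L`. -/
def complexitySet {α : Type} (L : Language α) : Set ℕ :=
  {n | ∃ M : DFA α (Fin n), M.accepts = L}

/-- A language is regular if it is recognized by some finite DFA. -/
def Regular {α : Type} (L : Language α) : Prop := (complexitySet L).Nonempty

/-- State complexity: the number of states of a minimal DFA for `L`. -/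
noncomputable def sc {α : Type} (L : Language α) : ℕ := sInf (complexitySet L)

/-- The cyclic permutation (0,1,…,n−1). -/
def cyc (n : ℕ) (i : Fin n) : Fin n :=
  ⟨(i.val + 1) % n, Nat.mod_lt _ (Nat.lt_of_le_of_lt (Nat.zero_le _) i.isLt)⟩

/-- The transposition (0,1). -/
def tp01 (n : ℕ) (i : Fin n) : Fin n :=
  if i.val = 0 then ⟨1 % n, Nat.mod_lt _ (Nat.lt_of_le_of_lt (Nat.zero_le _) i.isLt)⟩
  else if i.val = 1 then ⟨0, Nat.lt_of_le_of_lt (Nat.zero_le _) i.isLt⟩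
  else i

/-- The singular map sending n−1 to 0 and fixing everything else. -/
def sing (n : ℕ) (i : Fin n) : Fin n :=
  if i.val = n - 1 then ⟨0, Nat.lt_of_le_of_lt (Nat.zero_le _) i.isLt⟩ else i

/-- The transposition (n−2, n−1). -/
def tpTop (n : ℕ) (i : Fin n) : Fin n :=
  if i.val = n - 1 then ⟨n - 2, by have := i.isLt; omega⟩
  else if i.val = n - 2 then ⟨n - 1, by have := i.isLt; omega⟩
  else i

/-- The singular map sending n−1 to n−2 and fixing everything else. -/
def singTop (n : ℕ) (i : Fin n) : Fin n :=
  if i.val = n - 1 then ⟨n - 2, by have := i.isLt; omega⟩ else i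

/-- 𝒰ₙ(a,b,∅): binary alphabet, a = cycle (0,…,n−1), b = transposition (0,1),
initial state 0, final state n−1. -/
def U2dfa (n : ℕ) (h : 0 < n) : DFA (Fin 2) (Fin n) where
  step := fun i x => if x = 0 then cyc n i else tp01 n i
  start := ⟨0, h⟩
  accept := {i | i.val = n - 1}

def U2 (n : ℕ) (h : 0 < n) : Language (Fin 2) := (U2dfa n h).accepts

/-- 𝒰ₙ(a,b,c): a = cycle, b = transposition (0,1), c = (n−1 ↦ 0). -/
def Udfa (n : ℕ) (h : 0 < n) : DFA (Fin 3) (Fin n) where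
  step := fun i x => if x = 0 then cyc n i else if x = 1 then tp01 n i else sing n i
  start := ⟨0, h⟩
  accept := {i | i.val = n - 1}

def U (n : ℕ) (h : 0 < n) : Language (Fin 3) := (Udfa n h).accepts

/-- 𝒰ₙ(a,b,c) with final state set {0}. -/
def U0dfa (n : ℕ) (h : 0 < n) : DFA (Fin 3) (Fin n) where
  step := fun i x => if x = 0 then cyc n i else if x = 1 then tp01 n i else sing n i
  start := ⟨0, h⟩
  accept := {i | i.val = 0}

def U0 (n : ℕ) (h : 0 < n) : Language (Fin 3) := (U0dfa n h).accepts

/-- 𝒰ₙ(a,b,c,d): a = cycle, b = transposition (0,1), c = (n−1 ↦ 0), d = identity. -/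
def U4dfa (n : ℕ) (h : 0 < n) : DFA (Fin 4) (Fin n) where
  step := fun i x =>
    if x = 0 then cyc n i else if x = 1 then tp01 n i else if x = 2 then sing n i else i
  start := ⟨0, h⟩
  accept := {i | i.val = n - 1}

def U4 (n : ℕ) (h : 0 < n) : Language (Fin 4) := (U4dfa n h).accepts

/-- 𝒰ₙ(d,c,b,a): d = cycle, c = transposition (0,1), b = (n−1 ↦ 0), a = identity. -/
def U4dcbaDfa (n : ℕ) (h : 0 < n) : DFA (Fin 4) (Fin n) where
  step := fun i x =>
    if x = 3 then cyc n i else if x = 2 then tp01 n i else if x = 1 then sing n i else i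
  start := ⟨0, h⟩
  accept := {i | i.val = n - 1}

def U4dcba (n : ℕ) (h : 0 < n) : Language (Fin 4) := (U4dcbaDfa n h).accepts

/-- 𝒱ₙ(a,b,c,d): a = cycle, b = transposition (n−2,n−1), c = (n−1 ↦ n−2), d = identity. -/
def Vdfa (n : ℕ) (h : 0 < n) : DFA (Fin 4) (Fin n) where
  step := fun i x =>
    if x = 0 then cyc n i else if x = 1 then tpTop n i else if x = 2 then singTop n i else i
  start := ⟨0, h⟩
  accept := {i | i.val = n - 1}

def V (n : ℕ) (h : 0 < n) : Language (Fin 4) := (Vdfa n h).accepts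

/-- 𝒱ₙ(d,c,b,a): d = cycle, c = transposition (n−2,n−1), b = (n−1 ↦ n−2), a = identity. -/
def VdcbaDfa (n : ℕ) (h : 0 < n) : DFA (Fin 4) (Fin n) where
  step := fun i x =>
    if x = 3 then cyc n i else if x = 2 then tpTop n i else if x = 1 then singTop n i else i
  start := ⟨0, h⟩
  accept := {i | i.val = n - 1}

def Vdcba (n : ℕ) (h : 0 < n) : Language (Fin 4) := (VdcbaDfa n h).accepts

/-- Direct product of two DFAs with a chosen set of final states. -/
def prodDFA {α σ₁ σ₂ : Type} (M : DFA α σ₁) (N : DFA α σ₂) (acc : Set (σ₁ × σ₂)) :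
    DFA α (σ₁ × σ₂) where
  step := fun p x => (M.step p.1 x, N.step p.2 x)
  start := (M.start, N.start)
  accept := acc


/-- Chinese-remainder style pairing k ↦ (k mod m, k mod n). -/
def toPair (m n : ℕ) (hm : 0 < m) (hn : 0 < n) (k : Fin (m * n)) : Fin m × Fin n :=
  (⟨k.val % m, Nat.mod_lt _ hm⟩, ⟨k.val % n, Nat.mod_lt _ hn⟩)

/-- Componentwise successor on the product of two cyclic automata. -/
def prodSucc (m n : ℕ) (p : Fin m × Fin n) : Fin m × Fin n := (cyc m p.1, cyc n p.2)

/-- One-letter subset transition of the reversed NFA of 𝒰ₙ(a,b,c). -/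
def rstep (n : ℕ) (h : 0 < n) (S : Set (Fin n)) (x : Fin 3) : Set (Fin n) :=
  {q | (Udfa n h).step q x ∈ S}

/-- Action of a word on subsets in the reversed NFA of 𝒰ₙ(a,b,c). -/
def rword (n : ℕ) (h : 0 < n) (S : Set (Fin n)) (w : List (Fin 3)) : Set (Fin n) :=
  w.foldl (rstep n h) S

end SCPaper

open SCPaper

open SCPaper

/-!
`symmDiffDFA` runs `𝒰ₘ` next to the subset automaton of the reversal of `𝒰ₙ`. It recognises the
symmetric difference with `m·2ⁿ` states, so it suffices that all its states are reachable and
pairwise distinguishable.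

Words `aᵏ` separate different first components and words `aᵏc` separate different second
components. For reachability, `a` and `b` permute the second component through a generating set of
the symmetric group, so the family of sets `S` for which every `(i, S)` is reachable is closed
under permutations, and one set of each size suffices. Sizes `0` and `1` come from the initial
state `(0, {n-1})`. Reading `c` turns `(i, T)` with `0 ∈ T` into `(i, T ∪ {n-1})` for every
`i ≠ m-1`; the missing first component `m-1` is then reached by a rotation or by a conjugate
of `b`.
-/

namespace SCPaper

open scoped Fin.CommRing
open Finset

theorem sc_accepts_eq_card {α σ : Type} [Fintype σ] (M : DFA α σ)
    (hreach : Function.Surjective M.eval) (hdist : Function.Injective M.acceptsFrom) :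
    sc M.accepts = Fintype.card σ := by
  have hmem : Fintype.card σ ∈ complexitySet M.accepts :=
    ⟨M.reindex (Fintype.equivFin σ), M.accepts_reindex _⟩
  refine le_antisymm (Nat.sInf_le hmem) (le_csInf ⟨_, hmem⟩ ?_)
  rintro k ⟨N, hN⟩
  have hquot : N.acceptsFrom ∘ N.eval = M.acceptsFrom ∘ M.eval := by
    rw [← Language.leftQuotient_accepts, ← Language.leftQuotient_accepts, hN]
  have hinj : Function.Injective (N.eval ∘ Function.surjInv hreach) := by
    refine Function.Injective.of_comp (f := N.acceptsFrom) ?_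
    rwa [← Function.comp_assoc, hquot, Function.comp_assoc,
      (Function.rightInverse_surjInv hreach).comp_eq_id, Function.comp_id]
  simpa using Fintype.card_le_of_injective _ hinj

section FinArith

variable {n : ℕ} [NeZero n]

theorem val_eq_sub_one_iff {i : Fin n} : i.val = n - 1 ↔ i = -1 := by
  obtain ⟨k, rfl⟩ : ∃ k, n = k + 1 := Nat.exists_eq_succ_of_ne_zero (NeZero.ne n)
  simp [Fin.ext_iff, Fin.coe_neg_one]

theorem natCast_eq_neg_one_iff {a : ℕ} (ha : a < n) : (a : Fin n) = -1 ↔ a = n - 1 := by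
  rw [← val_eq_sub_one_iff, Fin.val_natCast, Nat.mod_eq_of_lt ha]

theorem natCast_eq_zero_iff_of_lt {a : ℕ} (ha : a < n) : (a : Fin n) = 0 ↔ a = 0 := by
  rw [Fin.ext_iff, Fin.val_natCast, Nat.mod_eq_of_lt ha, Fin.val_zero]

theorem zero_ne_neg_one (hn : 2 ≤ n) : (0 : Fin n) ≠ -1 := by
  simpa using (natCast_eq_neg_one_iff (a := 0) (by omega : 0 < n)).not.2 (by omega)

theorem neg_two_ne_neg_one (hn : 2 ≤ n) : (-2 : Fin n) ≠ -1 :=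
  fun h => zero_ne_neg_one hn (by linear_combination -h)

theorem cyc_eq_add_one (i : Fin n) : cyc n i = i + 1 := by
  ext
  simp [cyc, Fin.val_add, Nat.add_mod]

theorem tp01_eq_swap (hn : 2 ≤ n) (i : Fin n) : tp01 n i = Equiv.swap 0 1 i := by
  have hval1 : (1 : Fin n).val = 1 := Nat.mod_eq_of_lt (by omega : 1 < n)
  unfold tp01
  split_ifs with h0 h1
  · obtain rfl : i = 0 := Fin.ext h0
    ext; simp
  · obtain rfl : i = 1 := Fin.ext (by rw [h1, hval1])
    simp
  · rw [Equiv.swap_apply_of_ne_of_ne (fun h => h0 (by simp [h])) (fun h => h1 (by rw [h, hval1]))]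

theorem sing_neg_one : sing n (-1) = 0 := by
  simp [sing, val_eq_sub_one_iff]

theorem sing_of_ne {i : Fin n} (h : i ≠ -1) : sing n i = i := by
  simp [sing, val_eq_sub_one_iff, h]

theorem sing_ne_neg_one (hn : 2 ≤ n) (i : Fin n) : sing n i ≠ -1 := by
  by_cases h : i = -1
  · rw [h, sing_neg_one, ne_eq, ← val_eq_sub_one_iff]
    simp; omega
  · rwa [sing_of_ne h]

end FinArith

section Automaton

variable {m n : ℕ} [NeZero m] [NeZero n]

/-- `𝒰ₘ` run in parallel with the subset automaton of the reversal of `𝒰ₙ`: the second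
component is the set of states of `𝒰ₙ` from which the reversed input leads to `n - 1`. -/
def symmDiffDFA (m n : ℕ) [NeZero m] [NeZero n] : DFA (Fin 3) (Fin m × Finset (Fin n)) where
  step p x := ((Udfa m (NeZero.pos m)).step p.1 x,
    univ.filter fun q => (Udfa n (NeZero.pos n)).step q x ∈ p.2)
  start := (0, {-1})
  accept := {p | Xor (p.1 = -1) (0 ∈ p.2)}

theorem symmDiffDFA_evalFrom (p : Fin m × Finset (Fin n)) (w : List (Fin 3)) :
    (symmDiffDFA m n).evalFrom p w = ((Udfa m (NeZero.pos m)).evalFrom p.1 w,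
      univ.filter fun q => (Udfa n (NeZero.pos n)).evalFrom q w.reverse ∈ p.2) := by
  induction w generalizing p with
  | nil => exact Prod.ext rfl (filter_univ_mem _).symm
  | cons x w ih =>
    rw [DFA.evalFrom_cons, ih]
    simp [symmDiffDFA, DFA.evalFrom_append_singleton]

theorem mem_U_iff (w : List (Fin 3)) :
    w ∈ U m (NeZero.pos m) ↔ (Udfa m (NeZero.pos m)).evalFrom 0 w = -1 :=
  val_eq_sub_one_iff

theorem symmDiffDFA_accepts :
    (symmDiffDFA m n).accepts = lsymm (U m (NeZero.pos m)) (rev (U n (NeZero.pos n))) := by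
  ext w
  rw [DFA.mem_accepts, DFA.eval, symmDiffDFA_evalFrom]
  change Xor _ _ ↔ Xor (w ∈ U m _) (w.reverse ∈ U n _)
  simp [symmDiffDFA, mem_U_iff]

theorem symmDiffDFA_step_one (hm : 2 ≤ m) (hn : 2 ≤ n) (i : Fin m) (S : Finset (Fin n)) :
    (symmDiffDFA m n).step (i, S) 1 =
      (Equiv.swap 0 1 i, univ.filter fun q => Equiv.swap 0 1 q ∈ S) := by
  simp [symmDiffDFA, Udfa, tp01_eq_swap hm, tp01_eq_swap hn]

theorem symmDiffDFA_step_two (i : Fin m) (S : Finset (Fin n)) :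
    (symmDiffDFA m n).step (i, S) 2 = (sing m i, univ.filter fun q => sing n q ∈ S) := by
  simp [symmDiffDFA, Udfa]

/-- Reading `aᵏ` rotates both components by `k`; `rotate` also allows negative `k`. -/
def rotate (t : ℤ) (p : Fin m × Finset (Fin n)) : Fin m × Finset (Fin n) :=
  (p.1 + t, univ.filter fun q => q + t ∈ p.2)

@[simp]
theorem mem_rotate_snd {t : ℤ} {p : Fin m × Finset (Fin n)} {q : Fin n} :
    q ∈ (rotate t p).2 ↔ q + t ∈ p.2 := by
  simp [rotate]

theorem rotate_add (s t : ℤ) (p : Fin m × Finset (Fin n)) :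
    rotate (s + t) p = rotate s (rotate t p) := by
  refine Prod.ext ?_ (Finset.ext fun q => ?_)
  · simp only [rotate]; push_cast; ring
  · simp only [mem_rotate_snd]; push_cast; ring_nf

theorem rotate_mul_mul (k : ℤ) (p : Fin m × Finset (Fin n)) : rotate (m * n * k) p = p := by
  ext q
  · simp [rotate]
  · simp

theorem symmDiffDFA_step_zero (p : Fin m × Finset (Fin n)) :
    (symmDiffDFA m n).step p 0 = rotate 1 p := by
  simp [symmDiffDFA, Udfa, cyc_eq_add_one, rotate]

def Reach (p : Fin m × Finset (Fin n)) : Prop := ∃ w, (symmDiffDFA m n).eval w = p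

theorem reach_start : Reach ((0 : Fin m), ({-1} : Finset (Fin n))) := ⟨[], rfl⟩

theorem Reach.step {p : Fin m × Finset (Fin n)} (h : Reach p) (x : Fin 3) :
    Reach ((symmDiffDFA m n).step p x) := by
  obtain ⟨w, rfl⟩ := h
  exact ⟨w ++ [x], DFA.eval_append_singleton _ _ _⟩

theorem Reach.rotate {p : Fin m × Finset (Fin n)} (h : Reach p) (t : ℤ) :
    Reach (rotate t p) := by
  have hnat (k : ℕ) : Reach (SCPaper.rotate k p) := by
    induction k with
    | zero => simpa [SCPaper.rotate] using h
    | succ k ih =>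
      rw [Nat.cast_succ, add_comm, rotate_add, ← symmDiffDFA_step_zero]
      exact ih.step 0
  have hmod : 0 ≤ t % (m * n) := Int.emod_nonneg _ (by simp [NeZero.ne])
  rw [← Int.emod_add_mul_ediv t (m * n), rotate_add, rotate_mul_mul,
    ← Int.toNat_of_nonneg hmod]
  exact hnat _

def ReachAll (m : ℕ) [NeZero m] (S : Finset (Fin n)) : Prop := ∀ i : Fin m, Reach (i, S)

theorem ReachAll.rotate {S : Finset (Fin n)} (hS : ReachAll m S) (t : ℤ) :
    ReachAll m (univ.filter fun q => q + (t : Fin n) ∈ S) := by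
  intro i
  simpa [SCPaper.rotate] using (hS (i - t)).rotate t

theorem ReachAll.swap (hm : 2 ≤ m) (hn : 2 ≤ n) {S : Finset (Fin n)} (hS : ReachAll m S) :
    ReachAll m (univ.filter fun q => Equiv.swap 0 1 q ∈ S) := by
  intro i
  simpa [symmDiffDFA_step_one hm hn] using (hS (Equiv.swap 0 1 i)).step 1

/-- The letters `a` and `b` act on the second component as the cycle and the transposition
`(0 1)`, which generate the whole symmetric group. -/
theorem ReachAll.map (hm : 2 ≤ m) (hn : 2 ≤ n) {S : Finset (Fin n)} (hS : ReachAll m S)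
    (σ : Equiv.Perm (Fin n)) : ReachAll m (S.map σ.toEmbedding) := by
  obtain ⟨k, rfl⟩ : ∃ k, n = k + 2 := ⟨n - 2, by omega⟩
  have hσ : σ ∈ Subgroup.closure {finRotate (k + 2), Equiv.swap 0 (finRotate (k + 2) 0)} := by
    rw [Equiv.Perm.closure_cycle_adjacent_swap isCycle_finRotate support_finRotate]
    exact Subgroup.mem_top σ
  rw [finRotate_apply, zero_add] at hσ
  induction hσ using Subgroup.closure_induction'' generalizing S with
  | mem σ hσ =>
    rcases hσ with rfl | rfl
    · convert hS.rotate (-1) using 2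
      ext q
      simp [sub_eq_add_neg]
    · convert hS.swap hm hn using 2
      ext q
      simp
  | inv_mem σ hσ =>
    rcases hσ with rfl | rfl
    · convert hS.rotate 1 using 2
      ext q
      simp [Equiv.Perm.inv_def, finRotate_apply]
    · convert hS.swap hm hn using 2
      ext q
      simp
  | one => convert hS; ext q; simp [Equiv.Perm.one_def]
  | mul σ τ _ _ hσ hτ =>
    have hmap : S.map (σ * τ).toEmbedding = (S.map τ.toEmbedding).map σ.toEmbedding := by
      ext q
      simp only [Finset.mem_map_equiv, Equiv.Perm.mul_def, Equiv.symm_trans_apply]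
    exact hmap ▸ hσ (hτ hS)

theorem Reach.rotate_singleton {i : Fin m} {x : Fin n} (h : Reach (i, {x})) (t : ℤ) :
    Reach (i + (t : Fin m), {x - (t : Fin n)}) := by
  convert h.rotate t using 1
  refine Prod.ext rfl (Finset.ext fun q => ?_)
  simp [eq_sub_iff_add_eq]

theorem Reach.sing_singleton {x : Fin n} (h : Reach ((-1 : Fin m), {x})) (hx0 : x ≠ 0)
    (hx1 : x ≠ -1) : Reach ((0 : Fin m), {x}) := by
  convert h.step 2 using 1
  rw [symmDiffDFA_step_two, sing_neg_one]
  congr 1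
  ext q
  by_cases hq : q = -1
  · simp [hq, sing_neg_one, hx0.symm, hx1.symm]
  · simp [sing_of_ne hq]

theorem reach_insert_neg_one {T : Finset (Fin n)} (hT : ReachAll m T) (h0 : 0 ∈ T) {i : Fin m}
    (hi : i ≠ -1) : Reach (i, insert (-1) T) := by
  convert (hT i).step 2 using 1
  rw [symmDiffDFA_step_two, sing_of_ne hi]
  congr 1
  ext q
  by_cases hq : q = -1
  · simp [hq, sing_neg_one, h0]
  · simp [hq, sing_of_ne hq]

/-- The word `aʳ b a⁻ʳ`; it fixes `S` because `S` does not separate `r` and `r + 1`. -/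
theorem Reach.swap_conj (hm : 2 ≤ m) (hn : 2 ≤ n) {j : Fin m} {S : Finset (Fin n)}
    (h : Reach (j, S)) (r : ℤ) (hr : (r : Fin n) ∈ S ↔ (r : Fin n) + 1 ∈ S) :
    Reach (Equiv.swap 0 1 (j + (r : Fin m)) - (r : Fin m), S) := by
  have key (q : Fin n) : Equiv.swap 0 1 (q - r) + r ∈ S ↔ q ∈ S := by
    rcases eq_or_ne (q - r) 0 with h0 | h0
    · rw [h0, Equiv.swap_apply_left, sub_eq_zero.1 h0, add_comm 1]
      exact hr.symm
    rcases eq_or_ne (q - r) 1 with h1 | h1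
    · rw [h1, Equiv.swap_apply_right, zero_add, eq_add_of_sub_eq' h1]
      exact hr
    · rw [Equiv.swap_apply_of_ne_of_ne h0 h1, sub_add_cancel]
  convert ((h.rotate r).step 1).rotate (-r) using 1
  rw [SCPaper.rotate, symmDiffDFA_step_one hm hn]
  refine Prod.ext (by simp [SCPaper.rotate, sub_eq_add_neg]) (Finset.ext fun q => ?_)
  simp [← sub_eq_add_neg, key]

theorem reachAll_empty (hm : 2 ≤ m) (hn : 2 ≤ n) : ReachAll m (∅ : Finset (Fin n)) := by
  have h0 : Reach ((0 : Fin m), (∅ : Finset (Fin n))) := by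
    convert (reach_start (m := m) (n := n)).step 2 using 1
    rw [symmDiffDFA_step_two, sing_of_ne (zero_ne_neg_one hm)]
    simp [sing_ne_neg_one hn]
  intro i
  simpa [rotate] using h0.rotate i.val

/-- The first component is pushed up one step at a time: by `b` at the start, then by `c`
after rotating the singleton away from `0` and `n - 1`. -/
theorem reachAll_singleton_neg_one (hm : 2 ≤ m) (hn : 3 ≤ n) :
    ReachAll m ({-1} : Finset (Fin n)) := by
  have hsmall (s : ℕ) (hs : s < n) : Reach ((s : Fin m), ({-1} : Finset (Fin n))) := by
    induction s with
    | zero => simpa using reach_start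
    | succ s ih =>
      rcases Nat.eq_zero_or_pos s with rfl | hs0
      · convert (reach_start (m := m) (n := n)).step 1 using 1
        rw [symmDiffDFA_step_one hm (by omega)]
        have h1 : (1 : Fin n) ≠ -1 := by
          simpa using (natCast_eq_neg_one_iff (n := n) (a := 1) (by omega)).not.2 (by omega)
        refine Prod.ext (by simp) (Finset.ext fun q => ?_)
        simp [Equiv.swap_apply_eq_iff,
          Equiv.swap_apply_of_ne_of_ne (zero_ne_neg_one (by omega)).symm h1.symm]
      · have hx0 : (s : Fin n) ≠ 0 := by rw [ne_eq, natCast_eq_zero_iff_of_lt (by omega)]; omega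
        have hx1 : (s : Fin n) ≠ -1 := by rw [ne_eq, natCast_eq_neg_one_iff (by omega)]; omega
        have hlast : Reach ((-1 : Fin m), {(s : Fin n)}) := by
          convert (ih (by omega)).rotate_singleton (-(s + 1)) using 3 <;> push_cast <;> ring
        convert (hlast.sing_singleton hx0 hx1).rotate_singleton (s + 1) using 3 <;>
          push_cast <;> ring
  intro i
  convert (hsmall (i.val % n) (Nat.mod_lt _ (by omega))).rotate_singleton
    ((n * (i.val / n) : ℕ) : ℤ) using 2
  · rw [Int.cast_natCast, ← Nat.cast_add, Nat.mod_add_div, Fin.cast_val_eq_self]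
  · simp

theorem reachAll_pair (hm : 2 ≤ m) (hn : 3 ≤ n) (h0 : ReachAll m ({0} : Finset (Fin n))) :
    ReachAll m ({0, -1} : Finset (Fin n)) := by
  have hc {i : Fin m} (hi : i ≠ -1) : Reach (i, ({0, -1} : Finset (Fin n))) := by
    rw [pair_comm]
    exact reach_insert_neg_one h0 (mem_singleton_self 0) hi
  intro i
  rcases eq_or_ne i (-1) with rfl | hi
  swap
  · exact hc hi
  -- `m - 1` is reached from `m - 2` (if `n = 3`) or from `0` by a conjugate of `b`
  rcases (show n = 3 ∨ 4 ≤ n by omega) with rfl | hn4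
  · have hr : ((2 : ℤ) : Fin 3) ∈ ({0, -1} : Finset (Fin 3)) ↔
        ((2 : ℤ) : Fin 3) + 1 ∈ ({0, -1} : Finset (Fin 3)) :=
      iff_of_true (mem_insert_of_mem (mem_singleton.2 rfl)) (mem_insert_self _ _)
    have e : Equiv.swap 0 1 (-2 + ((2 : ℤ) : Fin m)) - ((2 : ℤ) : Fin m) = -1 := by norm_num
    exact e ▸ (hc (neg_two_ne_neg_one hm)).swap_conj hm (by omega) 2 hr
  · have h1 : (1 : Fin n) ≠ -1 := by
      simpa using (natCast_eq_neg_one_iff (n := n) (a := 1) (by omega)).not.2 (by omega)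
    have h2 : (2 : Fin n) ≠ -1 := by
      simpa using (natCast_eq_neg_one_iff (n := n) (a := 2) (by omega)).not.2 (by omega)
    have h2' : (2 : Fin n) ≠ 0 := by
      simpa using (natCast_eq_zero_iff_of_lt (n := n) (a := 2) (by omega)).not.2 (by omega)
    have e : Equiv.swap 0 1 (0 + ((1 : ℤ) : Fin m)) - ((1 : ℤ) : Fin m) = -1 := by simp
    simpa [e] using (hc (zero_ne_neg_one hm)).swap_conj hm (by omega) 1
      (by simp [h1, h2, h2', one_add_one_eq_two, show n ≠ 1 by omega])

theorem reachAll_of_neg_two_mem (hm : 2 ≤ m) (hn : 2 ≤ n) {k : ℕ}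
    (hk : ∀ T : Finset (Fin n), T.card = k → ReachAll m T) {S : Finset (Fin n)}
    (hS : S.card = k + 1) (h2 : -2 ∈ S) (h1 : -1 ∈ S) (h0 : 0 ∈ S) : ReachAll m S := by
  have hc {T : Finset (Fin n)} (hT : T.card = k + 1) (h0 : 0 ∈ T) (h1 : -1 ∈ T) {i : Fin m}
      (hi : i ≠ -1) : Reach (i, T) := by
    rw [← insert_erase h1]
    refine reach_insert_neg_one (hk _ ?_) (mem_erase.2 ⟨zero_ne_neg_one hn, h0⟩) hi
    rw [card_erase_of_mem h1, hT, Nat.add_sub_cancel]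
  intro i
  rcases eq_or_ne i (-1) with rfl | hi
  swap
  · exact hc hS h0 h1 hi
  -- `S` shifted down by one still contains `0` and `n - 1`; rotate back from `m - 2`
  have hshift := hc (T := S.map (Equiv.addRight 1).toEmbedding) (by rw [card_map, hS])
    (by simpa using h1) (by rw [mem_map_equiv]; convert h2 using 1; norm_num)
    (neg_two_ne_neg_one hm)
  have e : rotate 1 ((-2 : Fin m), S.map (Equiv.addRight 1).toEmbedding) = (-1, S) :=
    Prod.ext (by norm_num [rotate]) (Finset.ext fun q => by simp)
  exact e ▸ hshift.rotate 1

theorem reachAll (hm : 2 ≤ m) (hn : 3 ≤ n) (S : Finset (Fin n)) : ReachAll m S := by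
  have htransfer {S T : Finset (Fin n)} (hS : ReachAll m S) (h : S.card = T.card) :
      ReachAll m T := by
    obtain ⟨σ, rfl⟩ := Equiv.Perm.exists_map_finset_eq S T h
    exact hS.map hm (by omega) σ
  suffices ∀ k, ∀ T : Finset (Fin n), T.card = k → ReachAll m T from this _ S rfl
  intro k
  induction k with
  | zero =>
    intro T hT
    rw [card_eq_zero.1 hT]
    exact reachAll_empty hm (by omega)
  | succ k ih =>
    rcases k with _ | _ | k
    · intro T hT
      exact htransfer (reachAll_singleton_neg_one hm hn) (by rw [hT, card_singleton])
    · intro T hT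
      exact htransfer (reachAll_pair hm hn (ih {0} (card_singleton 0)))
        (by rw [hT, card_pair (zero_ne_neg_one (by omega))])
    · intro T hT
      obtain ⟨U, hsub, -, hU⟩ := exists_subsuperset_card_eq (subset_univ {-2, -1, 0})
        (card_le_three.trans (by omega)) (hT ▸ card_le_univ T)
      exact htransfer (reachAll_of_neg_two_mem hm (by omega) ih hU (hsub (by simp))
        (hsub (by simp)) (hsub (by simp))) (hU.trans hT.symm)

theorem symmDiffDFA_evalFrom_replicate (p : Fin m × Finset (Fin n)) (k : ℕ) :
    (symmDiffDFA m n).evalFrom p (List.replicate k 0) = rotate k p := by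
  induction k generalizing p with
  | zero => simp [rotate]
  | succ k ih =>
    rw [List.replicate_succ, DFA.evalFrom_cons, symmDiffDFA_step_zero, ih, ← rotate_add]
    push_cast
    ring_nf

theorem mem_acceptsFrom_replicate (p : Fin m × Finset (Fin n)) (k : ℕ) :
    List.replicate k 0 ∈ (symmDiffDFA m n).acceptsFrom p ↔
      Xor (p.1 + k = -1) ((k : Fin n) ∈ p.2) := by
  rw [DFA.mem_acceptsFrom, symmDiffDFA_evalFrom_replicate]
  simp [symmDiffDFA, rotate]

/-- After a final `c` the first component is never `m - 1`, so acceptance reads off the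
second component. -/
theorem mem_acceptsFrom_replicate_append_two (hm : 2 ≤ m) (hn : 2 ≤ n)
    (p : Fin m × Finset (Fin n)) (q : Fin n) :
    List.replicate q.val 0 ++ [2] ∈ (symmDiffDFA m n).acceptsFrom p ↔ q ∈ p.2 := by
  rw [DFA.mem_acceptsFrom, DFA.evalFrom_of_append, symmDiffDFA_evalFrom_replicate]
  simp [symmDiffDFA, Udfa, rotate, sing_ne_neg_one hm, sing_of_ne (zero_ne_neg_one hn)]

theorem symmDiffDFA_eval_surjective (hm : 2 ≤ m) (hn : 3 ≤ n) :
    Function.Surjective (symmDiffDFA m n).eval :=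
  fun p => reachAll hm hn p.2 p.1

theorem symmDiffDFA_acceptsFrom_injective (hm : 2 ≤ m) (hn : 2 ≤ n) :
    Function.Injective (symmDiffDFA m n).acceptsFrom := by
  rintro ⟨i, S⟩ ⟨j, T⟩ h
  have hw (w : List (Fin 3)) :
      w ∈ (symmDiffDFA m n).acceptsFrom (i, S) ↔
        w ∈ (symmDiffDFA m n).acceptsFrom (j, T) := by
    rw [h]
  obtain rfl : S = T := Finset.ext fun q => by
    have := hw (List.replicate q.val 0 ++ [2])
    rwa [mem_acceptsFrom_replicate_append_two hm hn,
      mem_acceptsFrom_replicate_append_two hm hn] at this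
  have hk := hw (List.replicate (-1 - i).val 0)
  simp only [mem_acceptsFrom_replicate, Fin.cast_val_eq_self, add_sub_cancel] at hk
  have hj : j + (-1 - i) = -1 := by unfold Xor at hk; tauto
  obtain rfl : j = i := by linear_combination hj
  rfl

end Automaton

end SCPaper

open SCPaper

theorem symmdiff_one_reversed_tight (m n : ℕ) (hm : 3 ≤ m) (hn : 3 ≤ n) :
    sc (lsymm (U m (by omega)) (rev (U n (by omega)))) = m * 2 ^ n := by
  have : NeZero m := ⟨by omega⟩
  have : NeZero n := ⟨by omega⟩
  rw [← symmDiffDFA_accepts, sc_accepts_eq_card _ (symmDiffDFA_eval_surjective (by omega) hn)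
    (symmDiffDFA_acceptsFrom_injective (by omega) (by omega))]
  simp [Fintype.card_finset]
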